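/- Let g : 𝒳 → 𝒴 be surjective, Y_k = g(X_k), and let Q be the transition matrix of the best Markov approximation Ỹ of Y (Q_{y→y'} = P(Y_2 = y' | Y_1 = y)). Set ε := sqrt( ln(2) · C_L(X,g) / ( 2 · min_{x∈𝒳} μ_x ) ). Then for every x ∈ 𝒳 and every subset B ⊆ 𝒴: Σ_{x'∈g^{−1}(B)} P_{x→x'} ≥ Σ_{y∈B} Q_{g(x)→y} − ε. (Consequently, the relation {(g(x), x) : x ∈ 𝒳} witnesses that X and Ỹ are ε-bisimilar: for every pair (g(x), x) in the relation and every set T of states, the probability under P that x transitions into the relation-image of T is at least the probability under Q that g(x) transitions into T, minus ε.) -/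

import Mathlib

open Filter Real

/-- Shannon entropy (base 2) of a finitely supported probability mass function. -/
noncomputable def ent {A : Type} [Fintype A] (q : A → ℝ) : ℝ :=
  - ∑ a, q a * Real.logb 2 (q a)

/-- Joint law of the first `n+1` samples of a Markov chain with initial distribution `μ`
and transition matrix `P`. -/
noncomputable def chainJoint {X : Type} (μ : X → ℝ) (P : X → X → ℝ) (n : ℕ)
    (x : Fin (n + 1) → X) : ℝ :=
  μ (x 0) * ∏ i : Fin n, P (x i.castSucc) (x i.succ)

/-- Joint law of `(Y_1, …, Y_{n+1})`, where `Y` is the stationary process obtained by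
observing the stationary Markov chain `X ~ (μ, P)` through the channel `W`. -/
noncomputable def obsJoint {X Y : Type} [Fintype X] (μ : X → ℝ) (P : X → X → ℝ)
    (W : X → Y → ℝ) (n : ℕ) (y : Fin (n + 1) → Y) : ℝ :=
  ∑ x : Fin (n + 1) → X, chainJoint μ P n x * ∏ i, W (x i) (y i)

/-- A finite stochastic matrix is irreducible and aperiodic iff it is primitive, i.e., some
power (and hence all larger powers) of it is entrywise positive. -/
def IrreducibleAperiodic {X : Type} [Fintype X] [DecidableEq X] (P : Matrix X X ℝ) : Prop :=
  ∃ N : ℕ, ∀ n ≥ N, ∀ x x' : X, 0 < (P ^ n) x x'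

section Defs

variable {X Y : Type} [Fintype X] [Fintype Y]

/-- Marginal distribution `ν` of each `Y_k`: `νᵀ = μᵀ W`. -/
noncomputable def nuDist (μ : X → ℝ) (W : X → Y → ℝ) : Y → ℝ := fun y => ∑ x, μ x * W x y

/-- Joint distribution of `(Y_1, Y_2)`. -/
noncomputable def jointYY (μ : X → ℝ) (P : X → X → ℝ) (W : X → Y → ℝ) : Y × Y → ℝ :=
  fun p => ∑ x, ∑ x', μ x * W x p.1 * P x x' * W x' p.2

/-- Joint distribution of `(X_1, Y_2)`. -/
noncomputable def jointX1Y2 (μ : X → ℝ) (P : X → X → ℝ) (W : X → Y → ℝ) : X × Y → ℝ :=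
  fun p => ∑ x', μ p.1 * P p.1 x' * W x' p.2

/-- Joint distribution of `(X_2, Y_1)`. -/
noncomputable def jointX2Y1 (μ : X → ℝ) (P : X → X → ℝ) (W : X → Y → ℝ) : X × Y → ℝ :=
  fun p => ∑ x, μ x * W x p.2 * P x p.1

/-- Joint distribution of `(X_1, X_2)`. -/
noncomputable def jointXX (μ : X → ℝ) (P : X → X → ℝ) : X × X → ℝ :=
  fun p => μ p.1 * P p.1 p.2

/-- Joint distribution of `(X_1, Y_1)`. -/
noncomputable def jointX1Y1 (μ : X → ℝ) (W : X → Y → ℝ) : X × Y → ℝ :=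
  fun p => μ p.1 * W p.1 p.2

/-- Joint distribution of `(X_2, Y_2)`. -/
noncomputable def jointX2Y2 (μ : X → ℝ) (P : X → X → ℝ) (W : X → Y → ℝ) : X × Y → ℝ :=
  fun p => ∑ x, μ x * P x p.1 * W p.1 p.2

/-- Joint distribution of `(X_1, X_2, Y_2)`. -/
noncomputable def jointX1X2Y2 (μ : X → ℝ) (P : X → X → ℝ) (W : X → Y → ℝ) :
    X × X × Y → ℝ :=
  fun p => μ p.1 * P p.1 p.2.1 * W p.2.1 p.2.2

/-- Joint distribution of `(X_1, X_2, Y_1)`. -/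
noncomputable def jointX1X2Y1 (μ : X → ℝ) (P : X → X → ℝ) (W : X → Y → ℝ) :
    X × X × Y → ℝ :=
  fun p => μ p.1 * W p.1 p.2.2 * P p.1 p.2.1

/-- Joint distribution of `(X_1, Y_1, Y_2)`. -/
noncomputable def jointX1Y1Y2 (μ : X → ℝ) (P : X → X → ℝ) (W : X → Y → ℝ) :
    X × Y × Y → ℝ :=
  fun p => ∑ x', μ p.1 * W p.1 p.2.1 * P p.1 x' * W x' p.2.2

/-- Conditional entropy `H(Y_2 | Y_1) = H(Y_1, Y_2) − H(Y_1)`. -/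
noncomputable def HY2gY1 (μ : X → ℝ) (P : X → X → ℝ) (W : X → Y → ℝ) : ℝ :=
  ent (jointYY μ P W) - ent (nuDist μ W)

/-- Conditional entropy `H(Y_2 | X_1) = H(X_1, Y_2) − H(X_1)`. -/
noncomputable def HY2gX1 (μ : X → ℝ) (P : X → X → ℝ) (W : X → Y → ℝ) : ℝ :=
  ent (jointX1Y2 μ P W) - ent μ

/-- Conditional entropy `H(Y_1 | X_2) = H(X_2, Y_1) − H(X_2)`. -/
noncomputable def HY1gX2 (μ : X → ℝ) (P : X → X → ℝ) (W : X → Y → ℝ) : ℝ :=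
  ent (jointX2Y1 μ P W) - ent μ

/-- Mutual information `I(X_1; X_2) = H(X_1) + H(X_2) − H(X_1, X_2)` (stationary case). -/
noncomputable def IX1X2 (μ : X → ℝ) (P : X → X → ℝ) : ℝ :=
  2 * ent μ - ent (jointXX μ P)

/-- Mutual information `I(Y_1; Y_2) = H(Y_1) + H(Y_2) − H(Y_1, Y_2)` (stationary case). -/
noncomputable def IY1Y2 (μ : X → ℝ) (P : X → X → ℝ) (W : X → Y → ℝ) : ℝ :=
  2 * ent (nuDist μ W) - ent (jointYY μ P W)

/-- The lumpability cost `C_L(X, W) = H(Y_2|Y_1) − H(Y_2|X_1)`. -/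
noncomputable def CL (μ : X → ℝ) (P : X → X → ℝ) (W : X → Y → ℝ) : ℝ :=
  HY2gY1 μ P W - HY2gX1 μ P W

/-- The predictability cost `C_P(X, W) = I(X_1;X_2) − I(Y_1;Y_2)`. -/
noncomputable def CP (μ : X → ℝ) (P : X → X → ℝ) (W : X → Y → ℝ) : ℝ :=
  IX1X2 μ P - IY1Y2 μ P W

/-- The aggregation cost `C_β(X, W) = (1−2β)·C_L(X,W) + β·C_P(X,W)`. -/
noncomputable def Cbeta (μ : X → ℝ) (P : X → X → ℝ) (W : X → Y → ℝ) (β : ℝ) : ℝ :=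
  (1 - 2 * β) * CL μ P W + β * CP μ P W

/-- `δ_β(X,W) = (1−β)·(H(Y_2|Y_1) − H̄(Y)) + β·(I(X_1;X_2) − H(Y_1) + H̄(Y))`, where `hbarY`
denotes the entropy rate `H̄(Y)`. -/
noncomputable def deltaBeta (μ : X → ℝ) (P : X → X → ℝ) (W : X → Y → ℝ)
    (hbarY β : ℝ) : ℝ :=
  (1 - β) * (HY2gY1 μ P W - hbarY) + β * (IX1X2 μ P - ent (nuDist μ W) + hbarY)

/-- Conditional mutual information
`I(X_1; X_2 | Y_2) = H(X_1,Y_2) + H(X_2,Y_2) − H(X_1,X_2,Y_2) − H(Y_2)`. -/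
noncomputable def IX1X2gY2 (μ : X → ℝ) (P : X → X → ℝ) (W : X → Y → ℝ) : ℝ :=
  ent (jointX1Y2 μ P W) + ent (jointX2Y2 μ P W) - ent (jointX1X2Y2 μ P W) -
    ent (nuDist μ W)

/-- Conditional mutual information
`I(X_2; X_1 | Y_1) = H(X_1,Y_1) + H(X_2,Y_1) − H(X_1,X_2,Y_1) − H(Y_1)`. -/
noncomputable def IX2X1gY1 (μ : X → ℝ) (P : X → X → ℝ) (W : X → Y → ℝ) : ℝ :=
  ent (jointX1Y1 μ W) + ent (jointX2Y1 μ P W) - ent (jointX1X2Y1 μ P W) -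
    ent (nuDist μ W)

/-- Conditional mutual information
`I(Y_2; X_1 | Y_1) = H(X_1,Y_1) + H(Y_1,Y_2) − H(X_1,Y_1,Y_2) − H(Y_1)`. -/
noncomputable def IY2X1gY1 (μ : X → ℝ) (P : X → X → ℝ) (W : X → Y → ℝ) : ℝ :=
  ent (jointX1Y1 μ W) + ent (jointYY μ P W) - ent (jointX1Y1Y2 μ P W) -
    ent (nuDist μ W)

/-- Mutual information `I(X_2; Y_1) = H(X_2) + H(Y_1) − H(X_2, Y_1)`. -/
noncomputable def IX2Y1 (μ : X → ℝ) (P : X → X → ℝ) (W : X → Y → ℝ) : ℝ :=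
  ent μ + ent (nuDist μ W) - ent (jointX2Y1 μ P W)

/-- The deterministic channel induced by an aggregation function `g : X → Y`:
`W_{x→y} = 1` iff `y = g x`. -/
noncomputable def detW [DecidableEq Y] (g : X → Y) : X → Y → ℝ :=
  fun x y => if g x = y then 1 else 0

/-- The row-stochastic matrix `R = P·W` for a deterministic aggregation `g`:
`R_{x→y} = ∑_{x' : g x' = y} P_{x→x'}`. -/
noncomputable def Rmat [DecidableEq Y] (P : X → X → ℝ) (g : X → Y) : X → Y → ℝ :=
  fun x y => ∑ x', if g x' = y then P x x' else 0

/-- Kullback–Leibler divergence (base 2) between two probability mass functions on `Y`. -/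
noncomputable def klDiv2 (p q : Y → ℝ) : ℝ :=
  ∑ y, p y * Real.logb 2 (p y / q y)

end Defs

/-! For a deterministic aggregation, `C_L` is the `μ`-average over `x` of the divergence
`D(R_x ‖ Q_{g x})` between the aggregated row `R_x = P_x ∘ g⁻¹` and the row of the best Markov
approximation (the chain rule for entropy on both conditional entropies). Hence
`D(R_x ‖ Q_{g x}) ≤ C_L / min μ` for every `x`, and Pinsker's inequality turns this into the
bound on `∑_{y ∈ B} (Q_{g x → y} - R_{x → y})` for every `B`. -/

open InformationTheory Finset

theorem three_mul_sq_sub_one_le_klFun {t : ℝ} (ht : 0 ≤ t) :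
    3 * (t - 1) ^ 2 ≤ 2 * (t + 2) * klFun t := by
  let F : ℝ → ℝ := fun t => 2 * (t + 2) * klFun t - 3 * (t - 1) ^ 2
  let F' : ℝ → ℝ := fun t => 2 * klFun t + 2 * (t + 2) * log t - 6 * (t - 1)
  have hF : ∀ t ∈ interior (Set.Ici (0 : ℝ)), HasDerivAt F (F' t) t := by
    intro t ht
    rw [interior_Ici] at ht
    refine ((((hasDerivAt_id t).add_const 2).const_mul 2).fun_mul (hasDerivAt_klFun ht.ne')).sub
      ((((hasDerivAt_id t).sub_const 1).pow 2).const_mul 3) |>.congr_deriv ?_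
    simp only [F', id]
    ring
  have hF' : ∀ t ∈ interior (Set.Ici (0 : ℝ)),
      HasDerivAt F' (4 * (log t + t⁻¹ - 1)) t := by
    intro t ht
    rw [interior_Ici] at ht
    refine (((hasDerivAt_klFun ht.ne').const_mul 2).add
      ((((hasDerivAt_id t).add_const 2).const_mul 2).fun_mul (hasDerivAt_log ht.ne'))).sub
      (((hasDerivAt_id t).sub_const 1).const_mul 6) |>.congr_deriv ?_
    have : t * t⁻¹ = 1 := mul_inv_cancel₀ ht.ne'
    simp only [id]
    linear_combination 2 * this
  have hconvex : ConvexOn ℝ (Set.Ici 0) F :=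
    convexOn_of_hasDerivWithinAt2_nonneg (convex_Ici 0) (by fun_prop)
      (fun t ht => (hF t ht).hasDerivWithinAt) (fun t ht => (hF' t ht).hasDerivWithinAt)
      fun t ht => by
        rw [interior_Ici] at ht
        linarith [one_sub_inv_le_log_of_pos ht]
  have hmin : IsMinOn F (Set.Ici 0) 1 := by
    refine hconvex.isMinOn_of_rightDeriv_eq_zero (by simp) ?_
    rw [((hF 1 (by simp)).hasDerivWithinAt).derivWithin (uniqueDiffWithinAt_Ioi 1)]
    simp [F', klFun_one]
  have : F 1 ≤ F t := hmin (Set.mem_Ici.2 ht)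
  simp only [F, klFun_one] at this
  linarith

theorem three_mul_sq_sub_le_mul_klFun_div {p q : ℝ} (hp : 0 ≤ p) (hq : 0 ≤ q)
    (hpq : q = 0 → p = 0) :
    3 * (p - q) ^ 2 ≤ 2 * (p + 2 * q) * (q * klFun (p / q)) := by
  rcases hq.eq_or_lt with rfl | hq
  · simp [hpq rfl]
  have h := mul_le_mul_of_nonneg_left (three_mul_sq_sub_one_le_klFun (div_nonneg hp hq.le))
    (sq_nonneg q)
  have hp' : p = p / q * q := (div_mul_cancel₀ p hq.ne').symm
  generalize p / q = t at h hp' ⊢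
  subst hp'
  linear_combination h

section Pinsker

variable {Y : Type} [Fintype Y] {p q : Y → ℝ}

theorem sum_sub_le_half_sum_abs_sub (hpq : ∑ y, p y = ∑ y, q y) (B : Finset Y) :
    ∑ y ∈ B, q y - ∑ y ∈ B, p y ≤ (∑ y, |p y - q y|) / 2 := by
  classical
  have hcompl : ∑ y ∈ B, (q y - p y) = ∑ y ∈ Bᶜ, (p y - q y) := by
    have h : ∑ y ∈ B, (q y - p y) + ∑ y ∈ Bᶜ, (q y - p y) = 0 := by
      rw [sum_add_sum_compl, sum_sub_distrib, hpq, sub_self]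
    rw [eq_neg_of_add_eq_zero_left h, ← sum_neg_distrib]
    simp
  have hB : ∑ y ∈ B, (q y - p y) ≤ ∑ y ∈ B, |p y - q y| :=
    sum_le_sum fun y _ => abs_sub_comm (p y) (q y) ▸ le_abs_self _
  have hBc : ∑ y ∈ Bᶜ, (p y - q y) ≤ ∑ y ∈ Bᶜ, |p y - q y| :=
    sum_le_sum fun y _ => le_abs_self _
  rw [← sum_add_sum_compl B, ← sum_sub_distrib]
  linarith

theorem klDiv2_eq_sub (hac : ∀ y, q y = 0 → p y = 0) :
    klDiv2 p q = ∑ y, p y * logb 2 (p y) - ∑ y, p y * logb 2 (q y) := by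
  rw [klDiv2, ← sum_sub_distrib]
  refine sum_congr rfl fun y _ => ?_
  by_cases hp : p y = 0
  · simp [hp]
  · rw [logb_div hp (mt (hac y) hp)]
    ring

theorem log_two_mul_klDiv2 (hpq : ∑ y, p y = ∑ y, q y) (hac : ∀ y, q y = 0 → p y = 0) :
    log 2 * klDiv2 p q = ∑ y, q y * klFun (p y / q y) := by
  have hterm : ∀ y,
      log 2 * (p y * logb 2 (p y / q y)) = q y * klFun (p y / q y) + (p y - q y) := by
    intro y
    by_cases hq : q y = 0
    · simp [hq, hac y hq, klFun_zero]
    · rw [logb, klFun]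
      field_simp
      ring
  rw [klDiv2, mul_sum]
  simp only [hterm, sum_add_distrib, sum_sub_distrib, hpq, sub_self, add_zero]

theorem klDiv2_nonneg (hp : ∀ y, 0 ≤ p y) (hq : ∀ y, 0 ≤ q y)
    (hpq : ∑ y, p y = ∑ y, q y) (hac : ∀ y, q y = 0 → p y = 0) : 0 ≤ klDiv2 p q := by
  have h := log_two_mul_klDiv2 hpq hac
  have : 0 ≤ log 2 * klDiv2 p q := h ▸ sum_nonneg fun y _ =>
    mul_nonneg (hq y) (klFun_nonneg (div_nonneg (hp y) (hq y)))
  exact nonneg_of_mul_nonneg_right this (log_pos one_lt_two)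

/-- Pinsker's inequality, via Cauchy–Schwarz against the weights `(p + 2q) / 3`, which sum
to `1`. -/
theorem sq_sum_abs_sub_le (hp : ∀ y, 0 ≤ p y) (hq : ∀ y, 0 ≤ q y) (hp1 : ∑ y, p y = 1)
    (hq1 : ∑ y, q y = 1) (hac : ∀ y, q y = 0 → p y = 0) :
    (∑ y, |p y - q y|) ^ 2 ≤ 2 * ∑ y, q y * klFun (p y / q y) := by
  have h := sum_sq_le_sum_mul_sum_of_sq_le_mul univ (r := fun y => |p y - q y|)
    (f := fun y => 2 * (q y * klFun (p y / q y))) (g := fun y => (p y + 2 * q y) / 3)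
    (fun y _ => mul_nonneg zero_le_two
      (mul_nonneg (hq y) (klFun_nonneg (div_nonneg (hp y) (hq y)))))
    (fun y _ => by linarith [hp y, hq y])
    (fun y _ => by
      have := three_mul_sq_sub_le_mul_klFun_div (hp y) (hq y) (hac y)
      rw [sq_abs]; linarith)
  have hg : ∑ y, (p y + 2 * q y) / 3 = 1 := by
    rw [← sum_div, sum_add_distrib, ← mul_sum, hp1, hq1]; norm_num
  rwa [hg, mul_one, ← mul_sum] at h

theorem sum_sub_le_sqrt_klDiv2 (hp : ∀ y, 0 ≤ p y) (hq : ∀ y, 0 ≤ q y)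
    (hp1 : ∑ y, p y = 1) (hq1 : ∑ y, q y = 1) (hac : ∀ y, q y = 0 → p y = 0)
    (B : Finset Y) :
    ∑ y ∈ B, q y - ∑ y ∈ B, p y ≤ √(log 2 * klDiv2 p q / 2) := by
  have htv := sum_sub_le_half_sum_abs_sub (hp1.trans hq1.symm) B
  have hpinsker := sq_sum_abs_sub_le hp hq hp1 hq1 hac
  rw [← log_two_mul_klDiv2 (hp1.trans hq1.symm) hac] at hpinsker
  have hT : 0 ≤ (∑ y, |p y - q y|) / 2 := by positivity
  refine htv.trans ((le_sqrt hT (by nlinarith)).2 ?_)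
  linarith

end Pinsker

theorem ent_mul_eq {A B : Type} [Fintype A] [Fintype B] (a : A → ℝ) (b : A → B → ℝ)
    (hb : ∀ i, ∑ j, b i j = 1) :
    ent (fun p : A × B => a p.1 * b p.1 p.2) =
      ent a - ∑ i, a i * ∑ j, b i j * logb 2 (b i j) := by
  have hterm : ∀ i j, a i * b i j * logb 2 (a i * b i j) =
      b i j * (a i * logb 2 (a i)) + a i * (b i j * logb 2 (b i j)) := by
    intro i j
    by_cases ha : a i = 0
    · simp [ha]
    by_cases hb : b i j = 0
    · simp [hb]
    rw [logb_mul ha hb]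
    ring
  simp only [ent, Fintype.sum_prod_type, hterm, sum_add_distrib, ← sum_mul, hb, one_mul,
    ← mul_sum]
  ring

section Aggregation

variable {X Y : Type} [Fintype X] [DecidableEq Y]

def IsBestMarkovApprox (μ : X → ℝ) (P : X → X → ℝ) (g : X → Y) (Q : Y → Y → ℝ) :
    Prop :=
  ∀ y y', Q y y' * nuDist μ (detW g) y = jointYY μ P (detW g) (y, y')

variable {μ : X → ℝ} {P : X → X → ℝ} {g : X → Y}

theorem nuDist_detW (y : Y) : nuDist μ (detW g) y = ∑ x with g x = y, μ x := by
  simp [nuDist, detW, sum_filter]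

theorem jointX1Y2_detW (x : X) (y : Y) :
    jointX1Y2 μ P (detW g) (x, y) = μ x * Rmat P g x y := by
  simp [jointX1Y2, detW, Rmat, mul_sum]

theorem jointYY_detW (y y' : Y) :
    jointYY μ P (detW g) (y, y') = ∑ x with g x = y, μ x * Rmat P g x y' := by
  rw [sum_filter]
  refine sum_congr rfl fun x _ => ?_
  by_cases hx : g x = y <;> simp [detW, Rmat, hx, mul_sum]

theorem Rmat_nonneg (hP0 : ∀ x x', 0 ≤ P x x') (x : X) (y : Y) : 0 ≤ Rmat P g x y :=
  sum_nonneg fun x' _ => ite_nonneg (hP0 x x') le_rfl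

theorem sum_Rmat [Fintype Y] (hP1 : ∀ x, ∑ x', P x x' = 1) (x : X) :
    ∑ y, Rmat P g x y = 1 := by
  simp [Rmat, sum_comm (γ := Y), hP1]

theorem sum_Rmat_eq_sum_filter (x : X) (B : Finset Y) :
    ∑ y ∈ B, Rmat P g x y = ∑ x' with g x' ∈ B, P x x' := by
  simp [Rmat, sum_comm (γ := Y), sum_filter]

theorem nuDist_detW_pos (hμ : ∀ x, 0 < μ x) (hg : Function.Surjective g) (y : Y) :
    0 < nuDist μ (detW g) y := by
  obtain ⟨x, rfl⟩ := hg y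
  rw [nuDist_detW]
  exact sum_pos (fun x _ => hμ x) ⟨x, by simp⟩

namespace IsBestMarkovApprox

variable {Q : Y → Y → ℝ}

theorem nonneg (hQ : IsBestMarkovApprox μ P g Q) (hμ : ∀ x, 0 < μ x)
    (hg : Function.Surjective g) (hP0 : ∀ x x', 0 ≤ P x x') (y y' : Y) : 0 ≤ Q y y' := by
  refine (mul_nonneg_iff_of_pos_right (nuDist_detW_pos hμ hg y)).1 ?_
  rw [hQ, jointYY_detW]
  exact sum_nonneg fun x _ => mul_nonneg (hμ x).le (Rmat_nonneg hP0 x y')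

theorem sum_eq_one [Fintype Y] (hQ : IsBestMarkovApprox μ P g Q) (hμ : ∀ x, 0 < μ x)
    (hg : Function.Surjective g) (hP1 : ∀ x, ∑ x', P x x' = 1) (y : Y) :
    ∑ y', Q y y' = 1 := by
  refine mul_right_cancel₀ (nuDist_detW_pos hμ hg y).ne' ?_
  simp only [sum_mul, hQ y, jointYY_detW, one_mul]
  rw [sum_comm, nuDist_detW]
  simp only [← mul_sum, sum_Rmat hP1, mul_one]

theorem Rmat_eq_zero (hQ : IsBestMarkovApprox μ P g Q) (hμ : ∀ x, 0 < μ x)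
    (hP0 : ∀ x x', 0 ≤ P x x') {x : X} {y : Y} (h : Q (g x) y = 0) : Rmat P g x y = 0 := by
  have hsum := hQ (g x) y
  rw [h, zero_mul, jointYY_detW, eq_comm,
    sum_eq_zero_iff_of_nonneg fun x _ => mul_nonneg (hμ x).le (Rmat_nonneg hP0 x y)] at hsum
  exact (mul_eq_zero.1 (hsum x (by simp))).resolve_left (hμ x).ne'

theorem klDiv2_nonneg [Fintype Y] (hQ : IsBestMarkovApprox μ P g Q) (hμ : ∀ x, 0 < μ x)
    (hg : Function.Surjective g) (hP0 : ∀ x x', 0 ≤ P x x') (hP1 : ∀ x, ∑ x', P x x' = 1)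
    (x : X) : 0 ≤ klDiv2 (Rmat P g x) (Q (g x)) :=
  _root_.klDiv2_nonneg (Rmat_nonneg hP0 x) (hQ.nonneg hμ hg hP0 _)
    ((sum_Rmat hP1 x).trans (hQ.sum_eq_one hμ hg hP1 _).symm) fun _ => hQ.Rmat_eq_zero hμ hP0

theorem sum_nuDist_mul_sum_logb [Fintype Y] (hQ : IsBestMarkovApprox μ P g Q) :
    ∑ y, nuDist μ (detW g) y * ∑ y', Q y y' * logb 2 (Q y y') =
      ∑ x, μ x * ∑ y, Rmat P g x y * logb 2 (Q (g x) y) := by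
  have hfiber : ∀ y, nuDist μ (detW g) y * ∑ y', Q y y' * logb 2 (Q y y') =
      ∑ x with g x = y, μ x * ∑ y', Rmat P g x y' * logb 2 (Q (g x) y') := by
    intro y
    simp only [mul_sum, ← mul_assoc, mul_comm _ (Q y _), hQ y, jointYY_detW, sum_mul]
    rw [sum_comm]
    refine sum_congr rfl fun x hx => sum_congr rfl fun y' _ => ?_
    rw [(mem_filter.1 hx).2]
  simp only [hfiber]
  exact sum_fiberwise univ g _

theorem CL_detW_eq [Fintype Y] (hQ : IsBestMarkovApprox μ P g Q) (hμ : ∀ x, 0 < μ x)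
    (hg : Function.Surjective g) (hP0 : ∀ x x', 0 ≤ P x x') (hP1 : ∀ x, ∑ x', P x x' = 1) :
    CL μ P (detW g) = ∑ x, μ x * klDiv2 (Rmat P g x) (Q (g x)) := by
  have hX1Y2 : jointX1Y2 μ P (detW g) = fun p => μ p.1 * Rmat P g p.1 p.2 :=
    funext fun p => jointX1Y2_detW p.1 p.2
  have hYY : jointYY μ P (detW g) = fun p => nuDist μ (detW g) p.1 * Q p.1 p.2 :=
    funext fun p => (hQ p.1 p.2).symm.trans (mul_comm _ _)
  rw [CL, HY2gY1, HY2gX1, hX1Y2, hYY, ent_mul_eq _ _ (sum_Rmat hP1),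
    ent_mul_eq _ _ (hQ.sum_eq_one hμ hg hP1), hQ.sum_nuDist_mul_sum_logb]
  simp only [klDiv2_eq_sub fun _ => hQ.Rmat_eq_zero hμ hP0, mul_sub, sum_sub_distrib]
  ring

theorem klDiv2_le_CL_div [Fintype Y] (hQ : IsBestMarkovApprox μ P g Q) (hμ : ∀ x, 0 < μ x)
    (hg : Function.Surjective g) (hP0 : ∀ x x', 0 ≤ P x x') (hP1 : ∀ x, ∑ x', P x x' = 1)
    {m : ℝ} (hm : 0 < m) {x : X} (hmx : m ≤ μ x) :
    klDiv2 (Rmat P g x) (Q (g x)) ≤ CL μ P (detW g) / m := by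
  rw [le_div_iff₀ hm, hQ.CL_detW_eq hμ hg hP0 hP1]
  calc klDiv2 (Rmat P g x) (Q (g x)) * m ≤ μ x * klDiv2 (Rmat P g x) (Q (g x)) := by
        rw [mul_comm]
        exact mul_le_mul_of_nonneg_right hmx (hQ.klDiv2_nonneg hμ hg hP0 hP1 x)
    _ ≤ ∑ x', μ x' * klDiv2 (Rmat P g x') (Q (g x')) :=
        single_le_sum (f := fun x' => μ x' * klDiv2 (Rmat P g x') (Q (g x')))
          (fun x' _ => mul_nonneg (hμ x').le (hQ.klDiv2_nonneg hμ hg hP0 hP1 x')) (mem_univ x)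

end IsBestMarkovApprox

end Aggregation

theorem eps_bisimulation_of_aggregation_general
    {X Y : Type} [Fintype X] [Fintype Y] [Nonempty X]
    [DecidableEq Y]
    (μ : X → ℝ) (P : X → X → ℝ) (g : X → Y) (hg : Function.Surjective g)
    (hP0 : ∀ x x', 0 ≤ P x x') (hP1 : ∀ x, ∑ x', P x x' = 1)
    (hμpos : ∀ x, 0 < μ x)
    (Q : Y → Y → ℝ)
    (hQ : ∀ y y', Q y y' * nuDist μ (detW g) y = jointYY μ P (detW g) (y, y')) :
    ∀ (x : X) (B : Finset Y),
      (∑ y ∈ B, Q (g x) y) -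
          Real.sqrt (Real.log 2 * CL μ P (detW g) /
            (2 * Finset.univ.inf' Finset.univ_nonempty μ)) ≤
        ∑ x' ∈ Finset.univ.filter (fun x' => g x' ∈ B), P x x' := by
  intro x B
  have hQ' : IsBestMarkovApprox μ P g Q := hQ
  set m := univ.inf' univ_nonempty μ
  have hm : 0 < m := (lt_inf'_iff _).2 fun x _ => hμpos x
  have hD := hQ'.klDiv2_le_CL_div hμpos hg hP0 hP1 hm (inf'_le _ (mem_univ x))
  have hpinsker := sum_sub_le_sqrt_klDiv2 (Rmat_nonneg hP0 x) (hQ'.nonneg hμpos hg hP0 (g x))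
    (sum_Rmat hP1 x) (hQ'.sum_eq_one hμpos hg hP1 (g x)) (fun _ => hQ'.Rmat_eq_zero hμpos hP0) B
  have hsqrt : √(log 2 * klDiv2 (Rmat P g x) (Q (g x)) / 2) ≤
      √(log 2 * CL μ P (detW g) / (2 * m)) := by
    refine sqrt_le_sqrt ?_
    calc log 2 * klDiv2 (Rmat P g x) (Q (g x)) / 2 ≤ log 2 * (CL μ P (detW g) / m) / 2 := by
          gcongr
      _ = log 2 * CL μ P (detW g) / (2 * m) := by ring
  rw [← sum_Rmat_eq_sum_filter]
  linarith

/-- (ε-bisimulation.) For a surjective deterministic aggregation `g` and `Q`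
the transition matrix of the best Markov approximation `Ỹ` of `Y`, setting
`ε = sqrt( ln 2 · C_L(X,g) / (2 · min_x μ_x) )`, for every `x ∈ X` and every `B ⊆ Y`:
`∑_{x' ∈ g⁻¹(B)} P_{x→x'} ≥ ∑_{y∈B} Q_{g(x)→y} − ε`.  (Hence the relation
`{(g x, x) : x ∈ X}` witnesses that `X` and `Ỹ` are ε-bisimilar.) -/
theorem eps_bisimulation_of_aggregation
    {X Y : Type} [Fintype X] [Fintype Y] [Nonempty X] [Nonempty Y]
    [DecidableEq X] [DecidableEq Y]
    (μ : X → ℝ) (P : X → X → ℝ) (g : X → Y) (hg : Function.Surjective g)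
    (hμ0 : ∀ x, 0 ≤ μ x) (hμ1 : ∑ x, μ x = 1)
    (hP0 : ∀ x x', 0 ≤ P x x') (hP1 : ∀ x, ∑ x', P x x' = 1)
    (hinv : ∀ x', ∑ x, μ x * P x x' = μ x')
    (hirr : IrreducibleAperiodic (Matrix.of fun a b => P a b))
    (hμpos : ∀ x, 0 < μ x)
    (Q : Y → Y → ℝ)
    (hQ : ∀ y y', Q y y' * nuDist μ (detW g) y = jointYY μ P (detW g) (y, y')) :
    ∀ (x : X) (B : Finset Y),
      (∑ y ∈ B, Q (g x) y) -
          Real.sqrt (Real.log 2 * CL μ P (detW g) /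
            (2 * Finset.univ.inf' Finset.univ_nonempty μ)) ≤
        ∑ x' ∈ Finset.univ.filter (fun x' => g x' ∈ B), P x x' :=
  eps_bisimulation_of_aggregation_general μ P g hg hP0 hP1 hμpos Q hQ
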